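/- Let f : Ω ⊂ ℝⁿ → ℝⁿ be harmonic (componentwise), nonvanishing, K-quasiregular (|Df| ≤ K ℓ(Df)), and p ∈ (1,2]. Then Δ(|f|^p) ≤ p(1 + (p−2)/(nK²)) |f|^{p−2} ‖Df‖². -/

import Mathlib

open Real RealInnerProductSpace

variable {n : ℕ}

/-- Laplacian of a function on `ℝⁿ` (with values in a normed space). -/
noncomputable def lapE {F : Type*} [NormedAddCommGroup F] [NormedSpace ℝ F]
    (f : EuclideanSpace ℝ (Fin n) → F) (x : EuclideanSpace ℝ (Fin n)) : F :=
  ∑ i, fderiv ℝ (fun y => fderiv ℝ f y (EuclideanSpace.single i 1)) x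
    (EuclideanSpace.single i 1)

/-- Squared Frobenius (Hilbert–Schmidt) norm of a linear map on `ℝⁿ`. -/
noncomputable def frobSq
    (A : EuclideanSpace ℝ (Fin n) →L[ℝ] EuclideanSpace ℝ (Fin n)) : ℝ :=
  ∑ i, ‖A (EuclideanSpace.single i 1)‖ ^ 2

/-- Minimal stretching `ℓ(A) = inf_{|h| = 1} |A h|`. -/
noncomputable def minStretch
    (A : EuclideanSpace ℝ (Fin n) →L[ℝ] EuclideanSpace ℝ (Fin n)) : ℝ :=
  ⨅ h : Metric.sphere (0 : EuclideanSpace ℝ (Fin n)) 1, ‖A h.1‖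

lemma minStretch_nonneg (A : EuclideanSpace ℝ (Fin n) →L[ℝ] EuclideanSpace ℝ (Fin n)) :
    0 ≤ minStretch A :=
  Real.iInf_nonneg fun _ => norm_nonneg _

lemma minStretch_mul_norm_le (A : EuclideanSpace ℝ (Fin n) →L[ℝ] EuclideanSpace ℝ (Fin n))
    (w : EuclideanSpace ℝ (Fin n)) : minStretch A * ‖w‖ ≤ ‖A w‖ := by
  rcases eq_or_ne w 0 with rfl | hw
  · simp
  have hnw : ‖w‖ ≠ 0 := norm_ne_zero_iff.mpr hw
  have hmem : (‖w‖⁻¹ • w) ∈ Metric.sphere (0 : EuclideanSpace ℝ (Fin n)) 1 := by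
    simp [mem_sphere_zero_iff_norm, norm_smul, abs_of_nonneg (inv_nonneg.mpr (norm_nonneg w)),
      inv_mul_cancel₀ hnw]
  have hbdd : BddBelow (Set.range fun h : Metric.sphere (0 : EuclideanSpace ℝ (Fin n)) 1 => ‖A h.1‖) :=
    ⟨0, by rintro _ ⟨h, rfl⟩; exact norm_nonneg _⟩
  have h1 : minStretch A ≤ ‖A (‖w‖⁻¹ • w)‖ := ciInf_le hbdd ⟨_, hmem⟩
  have h2 : ‖A (‖w‖⁻¹ • w)‖ = ‖w‖⁻¹ * ‖A w‖ := by
    rw [map_smul, norm_smul, norm_inv, norm_norm]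
  have := mul_le_mul_of_nonneg_right h1 (norm_nonneg w)
  rw [h2] at this
  calc minStretch A * ‖w‖ ≤ ‖w‖⁻¹ * ‖A w‖ * ‖w‖ := this
    _ = ‖A w‖ := by field_simp

lemma minStretch_mul_norm_le_adjoint
    (A : EuclideanSpace ℝ (Fin n) →L[ℝ] EuclideanSpace ℝ (Fin n))
    (v : EuclideanSpace ℝ (Fin n)) :
    minStretch A * ‖v‖ ≤ ‖ContinuousLinearMap.adjoint A v‖ := by
  rcases (minStretch_nonneg A).eq_or_lt with h0 | hm
  · rw [← h0, zero_mul]; exact norm_nonneg _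
  rcases eq_or_ne v 0 with rfl | hv
  · simp
  have hinj : Function.Injective A := by
    intro a b hab
    have h1 := minStretch_mul_norm_le A (a - b)
    rw [map_sub, hab, sub_self, norm_zero] at h1
    have h2 : ‖a - b‖ ≤ 0 := nonpos_of_mul_nonpos_right (by linarith) hm
    have := norm_nonneg (a - b)
    have : ‖a - b‖ = 0 := le_antisymm h2 this
    rwa [norm_eq_zero, sub_eq_zero] at this
  have hsurj : Function.Surjective A := by
    have := LinearMap.injective_iff_surjective
      (f := (A : EuclideanSpace ℝ (Fin n) →ₗ[ℝ] EuclideanSpace ℝ (Fin n)))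
    exact this.mp hinj
  obtain ⟨w, hw⟩ := hsurj v
  have hip : (inner ℝ (ContinuousLinearMap.adjoint A v) w : ℝ) = ‖v‖ ^ 2 := by
    rw [ContinuousLinearMap.adjoint_inner_left, hw, real_inner_self_eq_norm_sq]
  have hle : ‖v‖ ^ 2 ≤ ‖ContinuousLinearMap.adjoint A v‖ * ‖w‖ := by
    rw [← hip]; exact real_inner_le_norm _ _
  have hmw : minStretch A * ‖w‖ ≤ ‖v‖ := by rw [← hw]; exact minStretch_mul_norm_le A w
  have hvpos : 0 < ‖v‖ := norm_pos_iff.mpr hv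
  nlinarith [norm_nonneg (ContinuousLinearMap.adjoint A v), norm_nonneg w]

lemma sum_inner_sq_eq (A : EuclideanSpace ℝ (Fin n) →L[ℝ] EuclideanSpace ℝ (Fin n))
    (v : EuclideanSpace ℝ (Fin n)) :
    ∑ i, (inner ℝ v (A (EuclideanSpace.single i 1)) : ℝ) ^ 2
      = ‖ContinuousLinearMap.adjoint A v‖ ^ 2 := by
  have h1 : ∀ i, (inner ℝ v (A (EuclideanSpace.single i 1)) : ℝ)
      = ContinuousLinearMap.adjoint A v i := by
    intro i
    rw [← ContinuousLinearMap.adjoint_inner_left]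
    have := EuclideanSpace.inner_single_right (𝕜 := ℝ) i 1 (ContinuousLinearMap.adjoint A v)
    simpa using this
  simp_rw [h1]
  rw [← real_inner_self_eq_norm_sq]
  rw [PiLp.inner_apply]; simp [sq, mul_comm]

lemma frobSq_le (A : EuclideanSpace ℝ (Fin n) →L[ℝ] EuclideanSpace ℝ (Fin n)) :
    frobSq A ≤ n * ‖A‖ ^ 2 := by
  have h : ∀ i : Fin n, ‖A (EuclideanSpace.single i 1)‖ ^ 2 ≤ ‖A‖ ^ 2 := by
    intro i
    have h1 : ‖A (EuclideanSpace.single i 1)‖ ≤ ‖A‖ := by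
      have h2 := A.le_opNorm (EuclideanSpace.single i 1)
      rwa [EuclideanSpace.norm_single, norm_one, mul_one] at h2
    exact pow_le_pow_left₀ (norm_nonneg _) h1 2
  calc frobSq A ≤ ∑ _i : Fin n, ‖A‖ ^ 2 := Finset.sum_le_sum fun i _ => h i
    _ = n * ‖A‖ ^ 2 := by
        rw [Finset.sum_const, Finset.card_univ, Fintype.card_fin, nsmul_eq_mul]

lemma key_ineq (A : EuclideanSpace ℝ (Fin n) →L[ℝ] EuclideanSpace ℝ (Fin n))
    (K : ℝ) (hK : 1 ≤ K) (hqr : ‖A‖ ≤ K * minStretch A)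
    (v : EuclideanSpace ℝ (Fin n)) :
    frobSq A * ‖v‖ ^ 2 ≤ (n * K ^ 2) * ∑ i, (inner ℝ v (A (EuclideanSpace.single i 1)) : ℝ) ^ 2 := by
  rw [sum_inner_sq_eq]
  have hm := minStretch_nonneg A
  have hadj := minStretch_mul_norm_le_adjoint A v
  have hA2 : ‖A‖ ^ 2 ≤ K ^ 2 * minStretch A ^ 2 := by nlinarith [norm_nonneg A]
  have hF := frobSq_le A
  have hadj2 : (minStretch A) ^ 2 * ‖v‖ ^ 2 ≤ ‖ContinuousLinearMap.adjoint A v‖ ^ 2 := by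
    have := pow_le_pow_left₀ (by positivity) hadj 2
    rwa [mul_pow] at this
  have hKpos : (0:ℝ) < K := lt_of_lt_of_le one_pos hK
  calc frobSq A * ‖v‖ ^ 2 ≤ ((n : ℝ) * ‖A‖ ^ 2) * ‖v‖ ^ 2 :=
        mul_le_mul_of_nonneg_right hF (sq_nonneg _)
    _ ≤ ((n : ℝ) * (K ^ 2 * minStretch A ^ 2)) * ‖v‖ ^ 2 :=
        mul_le_mul_of_nonneg_right
          (mul_le_mul_of_nonneg_left hA2 (Nat.cast_nonneg n)) (sq_nonneg _)
    _ = ((n : ℝ) * K ^ 2) * (minStretch A ^ 2 * ‖v‖ ^ 2) := by ring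
    _ ≤ ((n : ℝ) * K ^ 2) * ‖ContinuousLinearMap.adjoint A v‖ ^ 2 :=
        mul_le_mul_of_nonneg_left hadj2 (by positivity)

lemma lapE_norm_rpow_eq
    (Ω : Set (EuclideanSpace ℝ (Fin n))) (hΩ : IsOpen Ω)
    (f : EuclideanSpace ℝ (Fin n) → EuclideanSpace ℝ (Fin n))
    (hsm : ContDiffOn ℝ (⊤ : ℕ∞) f Ω) (hharm : ∀ x ∈ Ω, lapE f x = 0)
    (hnv : ∀ x ∈ Ω, f x ≠ 0) (p : ℝ)
    (x : EuclideanSpace ℝ (Fin n)) (hx : x ∈ Ω) :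
    lapE (fun y => ‖f y‖ ^ p) x
      = p * (p - 2) * ‖f x‖ ^ (p - 4)
          * (∑ i, (⟪f x, fderiv ℝ f x (EuclideanSpace.single i 1)⟫) ^ 2)
        + p * ‖f x‖ ^ (p - 2) * frobSq (fderiv ℝ f x) := by
  classical
  -- basic data
  have hfc : ∀ y ∈ Ω, ContDiffAt ℝ (⊤ : ℕ∞) f y := fun y hy => hsm.contDiffAt (hΩ.mem_nhds hy)
  have hfd : ∀ y ∈ Ω, HasFDerivAt f (fderiv ℝ f y) y := fun y hy =>
    ((hfc y hy).differentiableAt (by simp)).hasFDerivAt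
  have hB : HasFDerivAt (fderiv ℝ f) (fderiv ℝ (fderiv ℝ f) x) x :=
    (((hfc x hx).fderiv_right (m := (⊤ : ℕ∞)) (mod_cast le_top)).differentiableAt (by simp)).hasFDerivAt
  set A : EuclideanSpace ℝ (Fin n) →L[ℝ] EuclideanSpace ℝ (Fin n) := fderiv ℝ f x with hA
  set B := fderiv ℝ (fderiv ℝ f) x with hBdef
  set e : Fin n → EuclideanSpace ℝ (Fin n) := fun i => EuclideanSpace.single i 1 with he
  -- derivative of y ↦ fderiv f y (e i)
  have hAe : ∀ i, HasFDerivAt (fun y => fderiv ℝ f y (e i))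
      ((ContinuousLinearMap.apply ℝ (EuclideanSpace ℝ (Fin n)) (e i)).comp B) x := fun i =>
    (ContinuousLinearMap.apply ℝ (EuclideanSpace ℝ (Fin n)) (e i)).hasFDerivAt.comp x hB
  -- harmonicity in terms of B
  have hlapf : ∑ i, B (e i) (e i) = 0 := by
    have h1 : ∀ i, fderiv ℝ (fun y => fderiv ℝ f y (e i)) x
        = (ContinuousLinearMap.apply ℝ (EuclideanSpace ℝ (Fin n)) (e i)).comp B := fun i => (hAe i).fderiv
    have := hharm x hx
    unfold lapE at this
    calc ∑ i, B (e i) (e i)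
        = ∑ i, fderiv ℝ (fun y => fderiv ℝ f y (e i)) x (e i) := by
          refine Finset.sum_congr rfl fun i _ => ?_
          rw [h1 i]; rfl
      _ = 0 := this
  -- the squared norm function
  set g : EuclideanSpace ℝ (Fin n) → ℝ := fun y => ⟪f y, f y⟫ with hg
  have hgpos : ∀ y ∈ Ω, 0 < g y := by
    intro y hy
    have : g y = ‖f y‖ ^ 2 := real_inner_self_eq_norm_sq (f y)
    rw [this]
    exact pow_pos (norm_pos_iff.mpr (hnv y hy)) 2
  have hgd : ∀ y ∈ Ω, HasFDerivAt g
      ((fderivInnerCLM ℝ (f y, f y)).comp ((fderiv ℝ f y).prod (fderiv ℝ f y))) y :=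
    fun y hy => (hfd y hy).inner ℝ (hfd y hy)
  set φ : EuclideanSpace ℝ (Fin n) → ℝ := fun y => g y ^ (p / 2) with hφ
  have hφf : (fun y : EuclideanSpace ℝ (Fin n) => ‖f y‖ ^ p) = φ := by
    funext y
    have h1 : g y = ‖f y‖ ^ (2 : ℕ) := real_inner_self_eq_norm_sq (f y)
    rw [hφ]
    simp only
    rw [h1, ← Real.rpow_natCast ‖f y‖ 2, ← Real.rpow_mul (norm_nonneg _)]
    norm_num
    rw [show (2:ℝ) * (p / 2) = p by ring]
  have hφd : ∀ y ∈ Ω, HasFDerivAt φ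
      ((p / 2 * g y ^ (p / 2 - 1)) •
        ((fderivInnerCLM ℝ (f y, f y)).comp ((fderiv ℝ f y).prod (fderiv ℝ f y)))) y := by
    intro y hy
    exact (Real.hasDerivAt_rpow_const (p := p / 2)
      (Or.inl (hgpos y hy).ne')).comp_hasFDerivAt y (hgd y hy)
  rw [hφf]
  have key : ∀ i, fderiv ℝ (fun y => fderiv ℝ φ y (e i)) x (e i)
      = p * (p - 2) * g x ^ (p / 2 - 1 - 1) * (⟪f x, A (e i)⟫) ^ 2
        + p * g x ^ (p / 2 - 1) * (⟪f x, B (e i) (e i)⟫ + ‖A (e i)‖ ^ 2) := by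
    intro i
    set σ : EuclideanSpace ℝ (Fin n) → ℝ :=
      fun y => (p / 2 * g y ^ (p / 2 - 1)) *
        (⟪f y, fderiv ℝ f y (e i)⟫ + ⟪fderiv ℝ f y (e i), f y⟫) with hσdef
    have hev : (fun y => fderiv ℝ φ y (e i)) =ᶠ[nhds x] σ := by
      filter_upwards [hΩ.mem_nhds hx] with y hy
      rw [(hφd y hy).fderiv]
      simp [hσdef, fderivInnerCLM_apply]
    have hc : HasFDerivAt (fun y => p / 2 * g y ^ (p / 2 - 1))
        ((p / 2) • (((p / 2 - 1) * g x ^ (p / 2 - 1 - 1)) •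
          ((fderivInnerCLM ℝ (f x, f x)).comp ((fderiv ℝ f x).prod (fderiv ℝ f x))))) x :=
      ((Real.hasDerivAt_rpow_const (p := p / 2 - 1)
        (Or.inl (hgpos x hx).ne')).comp_hasFDerivAt x (hgd x hx)).const_mul (p / 2)
    have hs1 : HasFDerivAt (fun y => (⟪f y, fderiv ℝ f y (e i)⟫ : ℝ))
        ((fderivInnerCLM ℝ (f x, fderiv ℝ f x (e i))).comp
          ((fderiv ℝ f x).prod
            ((ContinuousLinearMap.apply ℝ (EuclideanSpace ℝ (Fin n)) (e i)).comp B))) x :=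
      (hfd x hx).inner ℝ (hAe i)
    have hs2 : HasFDerivAt (fun y => (⟪fderiv ℝ f y (e i), f y⟫ : ℝ))
        ((fderivInnerCLM ℝ (fderiv ℝ f x (e i), f x)).comp
          (((ContinuousLinearMap.apply ℝ (EuclideanSpace ℝ (Fin n)) (e i)).comp B).prod
            (fderiv ℝ f x))) x :=
      (hAe i).inner ℝ (hfd x hx)
    have hσ : HasFDerivAt σ _ x := hc.mul (hs1.add hs2)
    rw [hev.fderiv_eq, hσ.fderiv]
    simp only [ContinuousLinearMap.add_apply, ContinuousLinearMap.smul_apply,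
      ContinuousLinearMap.comp_apply, ContinuousLinearMap.prod_apply,
      ContinuousLinearMap.apply_apply, fderivInnerCLM_apply, smul_eq_mul, Pi.add_apply, ← hA, ← hBdef]
    rw [real_inner_comm (B (e i) (e i)) (f x), real_inner_comm (A (e i)) (f x),
      real_inner_self_eq_norm_sq (A (e i))]
    ring
  have hsum0 : ∑ i, (⟪f x, B (e i) (e i)⟫ : ℝ) = 0 := by
    rw [← inner_sum, hlapf, inner_zero_right]
  have hl : lapE φ x = ∑ i, fderiv ℝ (fun y => fderiv ℝ φ y (e i)) x (e i) := rfl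
  have hF : frobSq A = ∑ i, ‖A (e i)‖ ^ 2 := rfl
  have hNpos : (0:ℝ) < ‖f x‖ := norm_pos_iff.mpr (hnv x hx)
  have hgx : g x = ‖f x‖ ^ (2 : ℕ) := real_inner_self_eq_norm_sq (f x)
  have e1 : g x ^ (p / 2 - 1) = ‖f x‖ ^ (p - 2) := by
    rw [hgx, ← Real.rpow_natCast ‖f x‖ 2, ← Real.rpow_mul hNpos.le]
    congr 1; push_cast; ring
  have e2 : g x ^ (p / 2 - 1 - 1) = ‖f x‖ ^ (p - 4) := by
    rw [hgx, ← Real.rpow_natCast ‖f x‖ 2, ← Real.rpow_mul hNpos.le]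
    congr 1; push_cast; ring
  calc lapE φ x
      = ∑ i, (p * (p - 2) * g x ^ (p / 2 - 1 - 1) * (⟪f x, A (e i)⟫) ^ 2
          + p * g x ^ (p / 2 - 1) * (⟪f x, B (e i) (e i)⟫ + ‖A (e i)‖ ^ 2)) := by
        rw [hl]; exact Finset.sum_congr rfl fun i _ => key i
    _ = p * (p - 2) * g x ^ (p / 2 - 1 - 1) * (∑ i, (⟪f x, A (e i)⟫) ^ 2)
          + p * g x ^ (p / 2 - 1)
            * ((∑ i, (⟪f x, B (e i) (e i)⟫ : ℝ)) + ∑ i, ‖A (e i)‖ ^ 2) := by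
        simp only [Finset.sum_add_distrib, Finset.mul_sum, mul_add]
    _ = p * (p - 2) * ‖f x‖ ^ (p - 4) * (∑ i, (⟪f x, A (e i)⟫) ^ 2)
          + p * ‖f x‖ ^ (p - 2) * frobSq A := by
        rw [hsum0, zero_add, e1, e2, hF]

/-- For a harmonic, nonvanishing, `K`-quasiregular map `f` and `p ∈ (1,2]`,
`Δ(|f|^p) ≤ p(1 + (p−2)/(nK²)) |f|^{p−2} ‖Df‖²`. -/
theorem laplacian_norm_pow_le (hn : 0 < n)
    (Ω : Set (EuclideanSpace ℝ (Fin n))) (hΩ : IsOpen Ω)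
    (f : EuclideanSpace ℝ (Fin n) → EuclideanSpace ℝ (Fin n))
    (hsm : ContDiffOn ℝ (⊤ : ℕ∞) f Ω) (hharm : ∀ x ∈ Ω, lapE f x = 0)
    (hnv : ∀ x ∈ Ω, f x ≠ 0) (K : ℝ) (hK : 1 ≤ K)
    (hqr : ∀ x ∈ Ω, ‖fderiv ℝ f x‖ ≤ K * minStretch (fderiv ℝ f x))
    (p : ℝ) (hp1 : 1 < p) (hp2 : p ≤ 2)
    (x : EuclideanSpace ℝ (Fin n)) (hx : x ∈ Ω) :
    lapE (fun y => ‖f y‖ ^ p) x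
      ≤ p * (1 + (p - 2) / (n * K ^ 2)) * ‖f x‖ ^ (p - 2)
          * frobSq (fderiv ℝ f x) := by
  have hNpos : (0:ℝ) < ‖f x‖ := norm_pos_iff.mpr (hnv x hx)
  have hid := lapE_norm_rpow_eq Ω hΩ f hsm hharm hnv p x hx
  rw [hid]
  have hKpos : (0:ℝ) < K := lt_of_lt_of_le one_pos hK
  have hnpos : (0:ℝ) < (n:ℝ) := Nat.cast_pos.mpr hn
  have hnK : (0:ℝ) < (n:ℝ) * K ^ 2 := by positivity
  have hkey := key_ineq (fderiv ℝ f x) K hK (hqr x hx) (f x)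
  set F := frobSq (fderiv ℝ f x) with hFdef
  set S := ∑ i, (⟪f x, fderiv ℝ f x (EuclideanSpace.single i 1)⟫ : ℝ) ^ 2 with hSdef
  have hSlb : ‖f x‖ ^ 2 * F / ((n:ℝ) * K ^ 2) ≤ S := by
    rw [div_le_iff₀ hnK]
    nlinarith [hkey]
  have hcoef : p * (p - 2) * ‖f x‖ ^ (p - 4) ≤ 0 := by
    have h := Real.rpow_pos_of_pos hNpos (p - 4)
    have hp0 : (0:ℝ) < p := lt_trans one_pos hp1
    have hnn : 0 ≤ p * ‖f x‖ ^ (p - 4) * (2 - p) :=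
      mul_nonneg (mul_nonneg hp0.le h.le) (by linarith)
    nlinarith [hnn]
  have h1 := mul_le_mul_of_nonpos_left hSlb hcoef
  have h2 : ‖f x‖ ^ (p - 4) * ‖f x‖ ^ 2 = ‖f x‖ ^ (p - 2) := by
    rw [← Real.rpow_natCast ‖f x‖ 2, ← Real.rpow_add hNpos]
    congr 1; push_cast; ring
  have h3 : p * (p - 2) * ‖f x‖ ^ (p - 4) * (‖f x‖ ^ 2 * F / ((n:ℝ) * K ^ 2))
      = p * (p - 2) * (‖f x‖ ^ (p - 2) * F) / ((n:ℝ) * K ^ 2) := by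
    rw [← h2]; ring
  have h4 : p * (p - 2) * (‖f x‖ ^ (p - 2) * F) / ((n:ℝ) * K ^ 2) + p * ‖f x‖ ^ (p - 2) * F
      = p * (1 + (p - 2) / ((n:ℝ) * K ^ 2)) * ‖f x‖ ^ (p - 2) * F := by
    field_simp
    ring
  linarith [h1]
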